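/- arXiv:2202.00234 — 2 statements merged into one kernel-verified Lean document; each statement's English description precedes it below -/
import Mathlib

section
/- For the uniform kernel with growth parameters 0 < a < m < b < 1 and a, b such that Φ1(a) = 1 − 2a and Φ1(b) = 1 − 2b lie in [−1,1] (i.e., 0 < a, b < 1), the function w2(x + c*) defined as the convolution Q[w1] shifted appropriately attains its global maximum value m + (b − a)(1 − m) at x = −2a. -/
theorem stmt11 (a m b : ℝ) (ha : 0 < a) (ham : a < m) (hmb : m < b) (hb1 : b < 1)
    (w2c : ℝ → ℝ)
    (hw2c : ∀ x, w2c x =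
      if x < -2 * b then m
      else if x < -2 * a then ((1 - m) / 2) * x + m + b - m * b
      else if x < 2 - 2 * b then (-m / 2) * x + m + b - m * b - a
      else if x ≤ 2 - 2 * a then (-(1 : ℝ) / 2) * x + 1 - a
      else 0) :
    w2c (-2 * a) = m + (b - a) * (1 - m) ∧
      ∀ x, w2c x ≤ m + (b - a) * (1 - m) := by
  constructor
  · rw [hw2c]; split_ifs <;> nlinarith
  · intro x; rw [hw2c]; split_ifs <;> nlinarith
end

section
/- For the uniform kernel case with parameters 0 < a < m < b < 1, the mean wave speed c* equals 1 − 2a if a ≤ b/2, and 1 − b + (b − 2a)/m if a > b/2, where c* is defined by (1/2)·sup{x : Q[w1](x) = a} and Q[w1](x) = w1(x − (1−2a)) − (1−m)·w1(x − (1−2b)) with w1 the piecewise linear function equal to 1 for x < −1, (1−x)/2 on [−1,1], 0 for x > 1. -/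
set_option maxHeartbeats 2000000 in
theorem stmt12 (a m b : ℝ) (ha : 0 < a) (ham : a < m) (hmb : m < b) (hb1 : b < 1)
    (hex : m + (b - a) * (1 - m) < b)
    (w1 : ℝ → ℝ)
    (hw1 : ∀ x, w1 x = if x < -1 then 1 else if x ≤ 1 then (1 - x) / 2 else 0)
    (Qw1 : ℝ → ℝ)
    (hQ : ∀ x, Qw1 x = w1 (x - (1 - 2 * a)) - (1 - m) * w1 (x - (1 - 2 * b)))
    (cstar : ℝ)
    (hc : cstar = (1 / 2) * sSup {x : ℝ | Qw1 x = a}) :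
    (a ≤ b / 2 → cstar = 1 - 2 * a) ∧
      (b / 2 < a → cstar = 1 - b + (b - 2 * a) / m) := by
  have hm0 : 0 < m := ha.trans ham
  constructor
  · intro hab
    have hx : Qw1 (2 - 4 * a) = a := by
      rw [hQ, hw1, hw1]
      split_ifs <;> nlinarith
    have hub : ∀ x ∈ {x : ℝ | Qw1 x = a}, x ≤ 2 - 4 * a := by
      intro x hx'
      by_contra hgt
      push_neg at hgt
      rw [Set.mem_setOf_eq, hQ, hw1, hw1] at hx'
      split_ifs at hx' <;> nlinarith
    have hs : sSup {x : ℝ | Qw1 x = a} = 2 - 4 * a :=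
      le_antisymm (csSup_le ⟨_, hx⟩ hub) (le_csSup ⟨_, hub⟩ hx)
    rw [hc, hs]; ring
  · intro hab
    have hm0' : m ≠ 0 := ne_of_gt hm0
    obtain ⟨c, hcdef⟩ : ∃ c : ℝ, c = (2 * b - 4 * a) / m := ⟨_, rfl⟩
    have hmc : m * c = 2 * b - 4 * a := by
      rw [hcdef, mul_div_cancel₀ _ hm0']
    have hc0 : c < 0 := hcdef ▸ div_neg_of_neg_of_pos (by linarith) hm0
    have hp1 : 0 < (b - a) * (1 - a) := mul_pos (by linarith) (by linarith)
    have hp2 : 0 < (m - a) * (1 - b + a) := mul_pos (by linarith) (by linarith)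
    have hlow : 2 * b - 2 * a - 2 < c := by
      rw [hcdef, lt_div_iff₀ hm0]; nlinarith
    have hx : Qw1 (2 - 2 * b + c) = a := by
      rw [hQ, hw1, hw1]
      rw [if_neg (by push_neg; linarith), if_pos (by linarith),
        if_neg (by push_neg; linarith), if_pos (by linarith)]
      have : (1 - m) * ((1 - (2 - 2 * b + c - (1 - 2 * b))) / 2) = (1 - m) * (-c / 2) := by
        ring_nf
      rw [this]
      nlinarith [hmc]
    have hub : ∀ x ∈ {x : ℝ | Qw1 x = a}, x ≤ 2 - 2 * b + c := by
      intro x hx'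
      by_contra hgt
      push_neg at hgt
      have hmx : m * (2 - 2 * b) + (2 * b - 4 * a) < m * x := by
        have := mul_lt_mul_of_pos_left hgt hm0
        rw [mul_add, hmc] at this
        linarith
      rw [Set.mem_setOf_eq, hQ, hw1, hw1] at hx'
      split_ifs at hx' <;> nlinarith [hmx, hp1, hp2, mul_pos hm0 hm0]
    have hs : sSup {x : ℝ | Qw1 x = a} = 2 - 2 * b + c :=
      le_antisymm (csSup_le ⟨_, hx⟩ hub) (le_csSup ⟨_, hub⟩ hx)
    rw [hc, hs, hcdef]
    field_simp
    ring
end
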